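/- Let μ be a probability measure on R^m supported in { ω : ‖ω‖_∞ ≤ 1 }. For i = 1, …, N let ρ_i be a probability measure on R × R^m × R with Q_i := ∫ |a| (‖b‖₁ + |c|) dρ_i < ∞, and let g_i : R^m → R satisfy g_i(ω) = ∫ a σ(b·ω + c) dρ_i(a,b,c) for μ-a.e. ω. Then for every n ∈ N there exists G = (G₁, …, G_N) : R^m → R^N, where each component G_i is a two-layer ReLU network with n hidden neurons whose path norm is at most 2Q_i, such that ∫_{R^m} | g(ω) − G(ω) |₂² dμ(ω) ≤ (3/n) Σ_{i=1}^N Q_i², where g = (g₁, …, g_N) and |·|₂ is the Euclidean norm on R^N. -/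

import Mathlib

open MeasureTheory

/-- The Euclidean norm on `ℝ^N`. -/
noncomputable def euclNorm {N : ℕ} (x : Fin N → ℝ) : ℝ := Real.sqrt (∑ i, x i ^ 2)

/-!
Maurey's empirical method. Reweighting `ρ` by the path weight `W(a, b, c) = |a| (‖b‖₁ + |c|)`
gives the probability measure `ρ̃ = (W / Q) ρ`, under which `g(ω) = ∫ ψ_p(ω) dρ̃(p)`, where `ψ_p`
is the neuron `p` with its outer weight rescaled to path weight `Q`; on the cube `|ψ_p| ≤ Q`.
Neurons are then picked greedily: if `S` is the sum of the first `n` picks, the `ρ̃`-average over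
`p` of `∫ (S + ψ_p - (n + 1) g)²` exceeds `∫ (S - n g)²` only by the variance of `ψ_p`, at most
`Q²`, so some `p` keeps the error below `∫ (S - n g)² + Q²`, and `∫ (S_n - n g)² ≤ n Q²` by
induction. Dividing by `n²`
gives the error `Q² / n` for each component, with every neuron of path weight at most `Q`.
-/

open ProbabilityTheory

lemma euclNorm_sq {N : ℕ} (x : Fin N → ℝ) : euclNorm x ^ 2 = ∑ i, x i ^ 2 :=
  Real.sq_sqrt (Finset.sum_nonneg fun _ _ => sq_nonneg _)

namespace Barron

lemma abs_sum_le_of_abs_le {n : ℕ} {f : Fin n → ℝ} {C : ℝ} (hf : ∀ j, |f j| ≤ C) :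
    |∑ j, f j| ≤ n * C :=
  (Finset.abs_sum_le_sum_abs _ _).trans
    (by simpa using Finset.sum_le_sum fun j (_ : j ∈ Finset.univ) => hf j)

lemma abs_inv_mul_sum_le {n : ℕ} {f : Fin n → ℝ} {C : ℝ} (hC : 0 ≤ C) (hf : ∀ j, |f j| ≤ C) :
    |(n : ℝ)⁻¹ * ∑ j, f j| ≤ C := by
  rcases n.eq_zero_or_pos with rfl | hn
  · simpa using hC
  rw [abs_mul, abs_inv, Nat.abs_cast, inv_mul_le_iff₀ (by exact_mod_cast hn)]
  exact abs_sum_le_of_abs_le hf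

lemma sq_le_sq_of_abs_le {a b : ℝ} (h : |a| ≤ b) : a ^ 2 ≤ b ^ 2 :=
  sq_le_sq' (abs_le.mp h).1 (abs_le.mp h).2

section Maurey

variable {X Ω : Type*} [MeasurableSpace X] [MeasurableSpace Ω]
  {ν : Measure X} [IsProbabilityMeasure ν] {μ : Measure Ω} [IsProbabilityMeasure μ]

lemma integral_sq_add_sub_integral_le {φ : X → ℝ} (hφ : AEStronglyMeasurable φ ν) {Q : ℝ}
    (hφQ : ∀ p, |φ p| ≤ Q) (c : ℝ) :
    ∫ p, (c + (φ p - ∫ q, φ q ∂ν)) ^ 2 ∂ν ≤ c ^ 2 + Q ^ 2 := by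
  have hφ2 : MemLp φ 2 ν := .of_bound hφ Q (.of_forall hφQ)
  have hZ2 : MemLp (fun p => φ p + (c - ∫ q, φ q ∂ν)) 2 ν := hφ2.add (memLp_const _)
  have hmean : ∫ p, (φ p + (c - ∫ q, φ q ∂ν)) ∂ν = c := by
    rw [integral_add (hφ2.integrable one_le_two) (integrable_const _), integral_const]
    simp
  have hsq : ∫ p, φ p ^ 2 ∂ν ≤ Q ^ 2 := by
    calc ∫ p, φ p ^ 2 ∂ν ≤ ∫ _, Q ^ 2 ∂ν :=
          integral_mono (hφ2.integrable_sq) (integrable_const _) fun p =>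
            sq_le_sq_of_abs_le (hφQ p)
      _ = Q ^ 2 := by simp
  have hvar := variance_eq_sub hZ2
  rw [variance_add_const hφ, hmean] at hvar
  have := variance_le_expectation_sq hφ
  simp only [Pi.pow_apply] at hvar this
  simp_rw [add_sub_left_comm c]
  linarith

lemma abs_integral_le_of_forall_abs_le {φ : X → ℝ} {Q : ℝ} (hφQ : ∀ p, |φ p| ≤ Q) :
    |∫ p, φ p ∂ν| ≤ Q := by
  simpa using norm_integral_le_of_norm_le_const (μ := ν) (f := φ) (C := Q)
    (.of_forall fun p => by simpa using hφQ p)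

variable {ψ : X → Ω → ℝ} {Q : ℝ}

lemma exists_integral_sq_add_sub_integral_le (hψ : Measurable (Function.uncurry ψ))
    (hψQ : ∀ᵐ ω ∂μ, ∀ p, |ψ p ω| ≤ Q) {h : Ω → ℝ} (hh : Measurable h) {C : ℝ}
    (hhC : ∀ᵐ ω ∂μ, |h ω| ≤ C) :
    ∃ p₀, ∫ ω, (h ω + (ψ p₀ ω - ∫ p, ψ p ω ∂ν)) ^ 2 ∂μ ≤ ∫ ω, h ω ^ 2 ∂μ + Q ^ 2 := by
  set F : X → Ω → ℝ := fun p ω => (h ω + (ψ p ω - ∫ p, ψ p ω ∂ν)) ^ 2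
  -- First moment method: some `p₀` is no worse than the `ν`-average, which Fubini computes
  -- pointwise in `ω`.
  have hFbound : ∀ᵐ z ∂ν.prod μ, ‖Function.uncurry F z‖ ≤ (C + 2 * Q) ^ 2 := by
    filter_upwards [Measure.quasiMeasurePreserving_snd.ae (hhC.and hψQ)] with z ⟨hh, hψ⟩
    have hF : |h z.2 + (ψ z.1 z.2 - ∫ p, ψ p z.2 ∂ν)| ≤ C + 2 * Q := by
      calc _ ≤ |h z.2| + (|ψ z.1 z.2| + |∫ p, ψ p z.2 ∂ν|) :=
            (abs_add_le _ _).trans (add_le_add le_rfl (abs_sub _ _))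
        _ ≤ C + 2 * Q := by linarith [hψ z.1, abs_integral_le_of_forall_abs_le (ν := ν) hψ]
    simp only [F, Function.uncurry, norm_pow, Real.norm_eq_abs, sq_abs]
    exact sq_le_sq_of_abs_le hF
  have hF : Integrable (Function.uncurry F) (ν.prod μ) := by
    refine .of_bound (Measurable.aestronglyMeasurable ?_) _ hFbound
    exact ((hh.comp measurable_snd).add (hψ.sub
      (hψ.stronglyMeasurable.integral_prod_left.measurable.comp measurable_snd))).pow_const 2
  have hh2 : Integrable (fun ω => h ω ^ 2) μ := by
    refine .of_bound (hh.pow_const 2).aestronglyMeasurable (C ^ 2) (hhC.mono fun ω hω => ?_)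
    simpa using sq_le_sq_of_abs_le hω
  obtain ⟨p₀, hp₀⟩ := exists_le_integral hF.integral_prod_left
  refine ⟨p₀, hp₀.trans ?_⟩
  calc ∫ p, ∫ ω, F p ω ∂μ ∂ν = ∫ ω, ∫ p, F p ω ∂ν ∂μ := integral_integral_swap hF
    _ ≤ ∫ ω, (h ω ^ 2 + Q ^ 2) ∂μ := by
      refine integral_mono_ae hF.integral_prod_right (hh2.add (integrable_const _)) ?_
      filter_upwards [hψQ] with ω hω
      exact integral_sq_add_sub_integral_le
        (hψ.comp measurable_prodMk_right).aestronglyMeasurable hω (h ω)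
    _ = ∫ ω, h ω ^ 2 ∂μ + Q ^ 2 := by
      rw [integral_add hh2 (integrable_const _), integral_const]
      simp

lemma exists_integral_sq_sum_sub_le (hψ : Measurable (Function.uncurry ψ))
    (hψQ : ∀ᵐ ω ∂μ, ∀ p, |ψ p ω| ≤ Q) (n : ℕ) :
    ∃ p : Fin n → X, ∫ ω, (∑ j, ψ (p j) ω - n * ∫ q, ψ q ω ∂ν) ^ 2 ∂μ ≤ n * Q ^ 2 := by
  induction n with
  | zero => exact ⟨Fin.elim0, by simp⟩
  | succ n ih =>
    obtain ⟨p, hp⟩ := ih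
    set h : Ω → ℝ := fun ω => ∑ j, ψ (p j) ω - n * ∫ q, ψ q ω ∂ν
    have hh : Measurable h :=
      (Finset.measurable_sum _ fun j _ => hψ.comp measurable_prodMk_left).sub
        (hψ.stronglyMeasurable.integral_prod_left.measurable.const_mul _)
    have hhC : ∀ᵐ ω ∂μ, |h ω| ≤ n * Q + n * Q := hψQ.mono fun ω hω => by
      refine (abs_sub _ _).trans (add_le_add (abs_sum_le_of_abs_le fun j => hω (p j)) ?_)
      rw [abs_mul, Nat.abs_cast]
      exact mul_le_mul_of_nonneg_left (abs_integral_le_of_forall_abs_le hω) n.cast_nonneg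
    obtain ⟨p₀, hp₀⟩ := exists_integral_sq_add_sub_integral_le (ν := ν) hψ hψQ hh hhC
    refine ⟨Fin.snoc p p₀, ?_⟩
    have hsnoc : ∀ ω, ∑ j, ψ ((Fin.snoc p p₀ : Fin (n + 1) → X) j) ω - ↑(n + 1) * ∫ q, ψ q ω ∂ν
        = h ω + (ψ p₀ ω - ∫ q, ψ q ω ∂ν) := fun ω => by
      simp only [Fin.sum_univ_castSucc, Fin.snoc_castSucc, Fin.snoc_last, h]
      push_cast
      ring
    simp_rw [hsnoc]
    push_cast
    linarith

theorem exists_integral_sq_integral_sub_average_le (hψ : Measurable (Function.uncurry ψ))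
    (hψQ : ∀ᵐ ω ∂μ, ∀ p, |ψ p ω| ≤ Q) {n : ℕ} (hn : 0 < n) :
    ∃ p : Fin n → X,
      ∫ ω, (∫ q, ψ q ω ∂ν - (n : ℝ)⁻¹ * ∑ j, ψ (p j) ω) ^ 2 ∂μ ≤ Q ^ 2 / n := by
  obtain ⟨p, hp⟩ := exists_integral_sq_sum_sub_le (ν := ν) hψ hψQ n
  refine ⟨p, ?_⟩
  have hn' : (n : ℝ) ≠ 0 := by positivity
  have hscale : ∀ ω, (∫ q, ψ q ω ∂ν - (n : ℝ)⁻¹ * ∑ j, ψ (p j) ω) ^ 2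
      = ((n : ℝ) ^ 2)⁻¹ * (∑ j, ψ (p j) ω - n * ∫ q, ψ q ω ∂ν) ^ 2 := fun ω => by
    field_simp
    ring
  simp_rw [hscale]
  rw [integral_const_mul]
  calc ((n : ℝ) ^ 2)⁻¹ * ∫ ω, (∑ j, ψ (p j) ω - n * ∫ q, ψ q ω ∂ν) ^ 2 ∂μ
      ≤ ((n : ℝ) ^ 2)⁻¹ * (n * Q ^ 2) := by gcongr
    _ = Q ^ 2 / n := by field_simp

end Maurey

section Neuron

variable {m : ℕ}

def neuron (p : ℝ × (Fin m → ℝ) × ℝ) (ω : Fin m → ℝ) : ℝ :=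
  p.1 * max ((∑ k, p.2.1 k * ω k) + p.2.2) 0

def pathWeight (p : ℝ × (Fin m → ℝ) × ℝ) : ℝ :=
  |p.1| * ((∑ k, |p.2.1 k|) + |p.2.2|)

/-- For `pathWeight p = 0` the new outer weight is `0` (as `x / 0 = 0`); such a neuron vanishes
on the cube anyway. -/
noncomputable def rescale (Q : ℝ) (p : ℝ × (Fin m → ℝ) × ℝ) : ℝ × (Fin m → ℝ) × ℝ :=
  (p.1 * Q / pathWeight p, p.2)

lemma pathWeight_nonneg (p : ℝ × (Fin m → ℝ) × ℝ) : 0 ≤ pathWeight p := by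
  unfold pathWeight; positivity

lemma measurable_pathWeight : Measurable (pathWeight : ℝ × (Fin m → ℝ) × ℝ → ℝ) := by
  unfold pathWeight; fun_prop

lemma measurable_uncurry_neuron : Measurable (Function.uncurry (neuron (m := m))) := by
  unfold neuron; fun_prop

lemma measurable_rescale (Q : ℝ) : Measurable (rescale (m := m) Q) :=
  ((measurable_fst.mul_const Q).div measurable_pathWeight).prodMk measurable_snd

lemma abs_relu_le {b : Fin m → ℝ} {c : ℝ} {ω : Fin m → ℝ} (hω : ∀ k, |ω k| ≤ 1) :
    |max ((∑ k, b k * ω k) + c) 0| ≤ (∑ k, |b k|) + |c| := by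
  have hsum : |∑ k, b k * ω k| ≤ ∑ k, |b k| :=
    (Finset.abs_sum_le_sum_abs _ _).trans <| Finset.sum_le_sum fun k _ => by
      simpa [abs_mul] using mul_le_mul_of_nonneg_left (hω k) (abs_nonneg (b k))
  calc |max ((∑ k, b k * ω k) + c) 0| ≤ |(∑ k, b k * ω k) + c| := by
        rw [abs_of_nonneg (le_max_right _ _)]
        exact max_le (le_abs_self _) (abs_nonneg _)
    _ ≤ (∑ k, |b k|) + |c| := (abs_add_le _ _).trans (add_le_add hsum le_rfl)

lemma abs_neuron_le_pathWeight (p : ℝ × (Fin m → ℝ) × ℝ) {ω : Fin m → ℝ}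
    (hω : ∀ k, |ω k| ≤ 1) : |neuron p ω| ≤ pathWeight p := by
  rw [neuron, pathWeight, abs_mul]
  exact mul_le_mul_of_nonneg_left (abs_relu_le hω) (abs_nonneg _)

lemma pathWeight_rescale_le {Q : ℝ} (hQ : 0 ≤ Q) (p : ℝ × (Fin m → ℝ) × ℝ) :
    pathWeight (rescale Q p) ≤ Q := by
  calc pathWeight (rescale Q p) = Q * (pathWeight p / pathWeight p) := by
        change |p.1 * Q / pathWeight p| * ((∑ k, |p.2.1 k|) + |p.2.2|) = _
        rw [abs_div, abs_mul, abs_of_nonneg hQ, abs_of_nonneg (pathWeight_nonneg p)]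
        unfold pathWeight
        ring
    _ ≤ Q := mul_le_of_le_one_right hQ (div_self_le_one _)

lemma pathWeight_div_mul_neuron_rescale {Q : ℝ} (hQ : Q ≠ 0) (p : ℝ × (Fin m → ℝ) × ℝ)
    {ω : Fin m → ℝ} (hω : ∀ k, |ω k| ≤ 1) :
    pathWeight p / Q * neuron (rescale Q p) ω = neuron p ω := by
  rcases (pathWeight_nonneg p).eq_or_lt with h | h
  · have := abs_neuron_le_pathWeight p hω
    rw [← h] at this ⊢
    simp [abs_nonpos_iff.mp this]
  · simp only [neuron, rescale]
    field_simp

noncomputable def pathWeighted (ρ : Measure (ℝ × (Fin m → ℝ) × ℝ)) :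
    Measure (ℝ × (Fin m → ℝ) × ℝ) :=
  ρ.withDensity fun p => ENNReal.ofReal (pathWeight p / ∫ q, pathWeight q ∂ρ)

variable {ρ : Measure (ℝ × (Fin m → ℝ) × ℝ)}

lemma isProbabilityMeasure_pathWeighted (hW : Integrable pathWeight ρ)
    (hQ : 0 < ∫ p, pathWeight p ∂ρ) : IsProbabilityMeasure (pathWeighted ρ) := by
  constructor
  rw [pathWeighted, withDensity_apply _ MeasurableSet.univ, Measure.restrict_univ,
    ← ofReal_integral_eq_lintegral_ofReal (hW.div_const _)
      (.of_forall fun p => div_nonneg (pathWeight_nonneg p) hQ.le),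
    integral_div, div_self hQ.ne', ENNReal.ofReal_one]

lemma integral_neuron_rescale_pathWeighted (hQ : 0 < ∫ p, pathWeight p ∂ρ) {ω : Fin m → ℝ}
    (hω : ∀ k, |ω k| ≤ 1) :
    ∫ p, neuron (rescale (∫ q, pathWeight q ∂ρ) p) ω ∂(pathWeighted ρ) = ∫ p, neuron p ω ∂ρ := by
  rw [pathWeighted, integral_withDensity_eq_integral_toReal_smul
    (measurable_pathWeight.div_const _).ennreal_ofReal (.of_forall fun _ => ENNReal.ofReal_lt_top)]
  refine integral_congr_ae (.of_forall fun p => ?_)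
  dsimp only
  rw [ENNReal.toReal_ofReal (div_nonneg (pathWeight_nonneg p) hQ.le), smul_eq_mul,
    pathWeight_div_mul_neuron_rescale hQ.ne' p hω]

lemma abs_integral_neuron_le (hW : Integrable pathWeight ρ) {ω : Fin m → ℝ}
    (hω : ∀ k, |ω k| ≤ 1) : |∫ p, neuron p ω ∂ρ| ≤ ∫ p, pathWeight p ∂ρ :=
  abs_integral_le_integral_abs.trans <|
    integral_mono_of_nonneg (.of_forall fun _ => abs_nonneg _) hW
      (.of_forall fun p => abs_neuron_le_pathWeight p hω)

variable {μ : Measure (Fin m → ℝ)} [IsProbabilityMeasure μ]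

lemma integrable_sq_integral_neuron_sub_average [SFinite ρ] (hμ : ∀ᵐ ω ∂μ, ∀ k, |ω k| ≤ 1)
    (hW : Integrable pathWeight ρ) {n : ℕ} {q : Fin n → ℝ × (Fin m → ℝ) × ℝ}
    (hq : ∀ j, pathWeight (q j) ≤ ∫ p, pathWeight p ∂ρ) :
    Integrable (fun ω => (∫ p, neuron p ω ∂ρ - (n : ℝ)⁻¹ * ∑ j, neuron (q j) ω) ^ 2) μ := by
  have hmeas : Measurable fun ω => ∫ p, neuron p ω ∂ρ - (n : ℝ)⁻¹ * ∑ j, neuron (q j) ω :=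
    measurable_uncurry_neuron.stronglyMeasurable.integral_prod_left.measurable.sub <|
      (Finset.measurable_sum _ fun j _ =>
        measurable_uncurry_neuron.comp measurable_prodMk_left).const_mul _
  refine .of_bound (hmeas.pow_const 2).aestronglyMeasurable ((2 * ∫ p, pathWeight p ∂ρ) ^ 2) ?_
  filter_upwards [hμ] with ω hω
  have hnet := abs_inv_mul_sum_le (integral_nonneg pathWeight_nonneg)
    fun j => (abs_neuron_le_pathWeight (q j) hω).trans (hq j)
  have hdiff := (abs_sub _ _).trans (add_le_add (abs_integral_neuron_le hW hω) hnet)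
  simpa [two_mul] using sq_le_sq_of_abs_le hdiff

theorem exists_neurons_integral_sq_sub_le (hμ : ∀ᵐ ω ∂μ, ∀ k, |ω k| ≤ 1)
    (hW : Integrable pathWeight ρ) {n : ℕ} (hn : 0 < n) :
    ∃ q : Fin n → ℝ × (Fin m → ℝ) × ℝ, (∀ j, pathWeight (q j) ≤ ∫ p, pathWeight p ∂ρ) ∧
      ∫ ω, (∫ p, neuron p ω ∂ρ - (n : ℝ)⁻¹ * ∑ j, neuron (q j) ω) ^ 2 ∂μ
        ≤ (∫ p, pathWeight p ∂ρ) ^ 2 / n := by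
  set Q := ∫ p, pathWeight p ∂ρ
  have hQnonneg : 0 ≤ Q := integral_nonneg pathWeight_nonneg
  rcases hQnonneg.eq_or_lt with hQ0 | hQ0
  · refine ⟨0, fun j => by simpa [pathWeight] using hQnonneg, le_of_eq ?_⟩
    have hW0 : ∀ᵐ p ∂ρ, pathWeight p = 0 :=
      (integral_eq_zero_iff_of_nonneg pathWeight_nonneg hW).mp hQ0.symm
    rw [← hQ0, zero_pow two_ne_zero, zero_div]
    refine integral_eq_zero_of_ae (hμ.mono fun ω hω => ?_)
    have hg : ∫ p, neuron p ω ∂ρ = 0 := integral_eq_zero_of_ae <| hW0.mono fun p hp =>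
      abs_nonpos_iff.mp ((abs_neuron_le_pathWeight p hω).trans hp.le)
    simp only [Pi.zero_apply, hg]
    simp [neuron]
  · have := isProbabilityMeasure_pathWeighted hW hQ0
    have hψ : Measurable (Function.uncurry fun p (ω : Fin m → ℝ) => neuron (rescale Q p) ω) :=
      measurable_uncurry_neuron.comp ((measurable_rescale Q).prodMap measurable_id)
    obtain ⟨q, hq⟩ := exists_integral_sq_integral_sub_average_le (ν := pathWeighted ρ) hψ
      (hμ.mono fun ω hω p =>
        (abs_neuron_le_pathWeight _ hω).trans (pathWeight_rescale_le hQ0.le p)) hn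
    refine ⟨fun j => rescale Q (q j), fun j => pathWeight_rescale_le hQ0.le (q j),
      (integral_congr_ae ?_).trans_le hq⟩
    filter_upwards [hμ] with ω hω
    rw [integral_neuron_rescale_pathWeighted hQ0 hω]

end Neuron

end Barron

open Barron

/-- Vector-valued Barron approximation: let `μ` be a probability measure on `ℝ^m` supported in
`{ω : ‖ω‖_∞ ≤ 1}`; for `i = 1, …, N` let `ρ i` be a probability measure on `ℝ × ℝ^m × ℝ` with
`Q i = ∫ |a| (‖b‖₁ + |c|) d(ρ i) < ∞` and let `g i` satisfy
`g i ω = ∫ a σ(b·ω + c) d(ρ i)` for `μ`-a.e. `ω` (`σ` the ReLU). Then for every `n ≥ 1` there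
is `G = (G_1, …, G_N)` whose components are two-layer ReLU networks with `n` hidden neurons
and path norm at most `2 Q i`, with `∫ |g(ω) − G(ω)|₂² dμ(ω) ≤ (3/n) Σ_i (Q i)²`. -/
theorem stmt15 {m N : ℕ} (μ : Measure (Fin m → ℝ)) [IsProbabilityMeasure μ]
    (hμsupp : ∀ᵐ ω ∂μ, ∀ i, |ω i| ≤ 1)
    (ρ : Fin N → Measure (ℝ × (Fin m → ℝ) × ℝ)) (hρ : ∀ i, IsProbabilityMeasure (ρ i))
    (hQint : ∀ i, Integrable (fun p : ℝ × (Fin m → ℝ) × ℝ =>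
        |p.1| * ((∑ k, |p.2.1 k|) + |p.2.2|)) (ρ i))
    (Q : Fin N → ℝ) (hQ : ∀ i, Q i = ∫ p, |p.1| * ((∑ k, |p.2.1 k|) + |p.2.2|) ∂(ρ i))
    (g : Fin N → (Fin m → ℝ) → ℝ)
    (hg : ∀ i, ∀ᵐ ω ∂μ, g i ω = ∫ p, p.1 * max ((∑ k, p.2.1 k * ω k) + p.2.2) 0 ∂(ρ i)) :
    ∀ n : ℕ, 0 < n →
      ∃ (a : Fin N → Fin n → ℝ) (b : Fin N → Fin n → Fin m → ℝ) (c : Fin N → Fin n → ℝ),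
        (∀ i, (n : ℝ)⁻¹ * (∑ j, |a i j| * ((∑ k, |b i j k|) + |c i j|)) ≤ 2 * Q i) ∧
        (∫ ω, euclNorm (fun i =>
            g i ω - (n : ℝ)⁻¹ * ∑ j, a i j * max ((∑ k, b i j k * ω k) + c i j) 0) ^ 2 ∂μ)
          ≤ 3 / n * ∑ i, Q i ^ 2 := by
  intro n hn
  have hQW : ∀ i, Q i = ∫ p, pathWeight p ∂(ρ i) := hQ
  have hQ0 : ∀ i, 0 ≤ Q i := fun i => hQW i ▸ integral_nonneg pathWeight_nonneg
  choose q hqQ hq using fun i => exists_neurons_integral_sq_sub_le hμsupp (hQint i) (ρ := ρ i) hn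
  simp only [← hQW] at hqQ hq
  refine ⟨fun i j => (q i j).1, fun i j => (q i j).2.1, fun i j => (q i j).2.2, fun i => ?_, ?_⟩
  · have hav := abs_inv_mul_sum_le (hQ0 i) fun j =>
      (abs_of_nonneg (pathWeight_nonneg _)).trans_le (hqQ i j)
    exact (le_abs_self _).trans (hav.trans (by linarith [hQ0 i]))
  · change ∫ ω, euclNorm (fun i => g i ω - (n : ℝ)⁻¹ * ∑ j, neuron (q i j) ω) ^ 2 ∂μ ≤ _
    have hsum : (fun ω => euclNorm (fun i => g i ω - (n : ℝ)⁻¹ * ∑ j, neuron (q i j) ω) ^ 2)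
        =ᵐ[μ] fun ω => ∑ i, (∫ p, neuron p ω ∂(ρ i) - (n : ℝ)⁻¹ * ∑ j, neuron (q i j) ω) ^ 2 := by
      filter_upwards [ae_all_iff.mpr hg] with ω hω
      rw [euclNorm_sq]
      exact Finset.sum_congr rfl fun i _ => by rw [hω i]; rfl
    rw [integral_congr_ae hsum, integral_finsetSum _ fun i _ =>
      integrable_sq_integral_neuron_sub_average hμsupp (hQint i) ((hQW i).symm ▸ hqQ i)]
    calc _ ≤ ∑ i, Q i ^ 2 / n := Finset.sum_le_sum fun i _ => hq i
      _ = 1 / n * ∑ i, Q i ^ 2 := by rw [Finset.mul_sum]; simp only [one_div_mul_eq_div]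
      _ ≤ 3 / n * ∑ i, Q i ^ 2 := by gcongr; norm_num
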